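/- (Π₂ selection from a coded model of the jump.) Let R₀(j, X) and R₁(j, X) be Π⁰₂ predicates relative to a set X (i.e., of the form ∀m ∃n φ(j, m, n, X) with φ computable in X). Let X ⊆ ℕ be a set and let W be an effectively coded ω-model of WKL₀ containing X'. Then there exists a function h ≤_T W with values in {0, 1} such that for every j: if R₀(j, X) or R₁(j, X) holds, then h(j) = 0 implies R₀(j, X) and h(j) = 1 implies R₁(j, X). -/

import Mathlib

/-!
Common computability-theoretic notions (relative to an oracle), formalized from scratch:
oracle machine codes, relative computability, Turing reducibility, the Turing jump,
the recursive join, binary trees, and the relation `A ≪ B` ("every infinite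
`A`-computable binary tree has an infinite path computable from `B`").
-/

namespace ArxivLL

/-- Oracle machine codes: `Nat.Partrec.Code` together with an `oracle` instruction. -/
inductive OCode : Type
  | zero : OCode
  | succ : OCode
  | left : OCode
  | right : OCode
  | oracle : OCode
  | pair : OCode → OCode → OCode
  | comp : OCode → OCode → OCode
  | prec : OCode → OCode → OCode
  | rfind' : OCode → OCode

/-- Evaluation of an oracle machine code relative to a (total) oracle `O : ℕ → ℕ`. -/
def evalo (O : ℕ → ℕ) : OCode → ℕ →. ℕ
  | .zero => pure 0
  | .succ => fun n => Part.some (n + 1)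
  | .left => fun n => Part.some n.unpair.1
  | .right => fun n => Part.some n.unpair.2
  | .oracle => fun n => Part.some (O n)
  | .pair cf cg => fun n => Nat.pair <$> evalo O cf n <*> evalo O cg n
  | .comp cf cg => fun n => evalo O cg n >>= evalo O cf
  | .prec cf cg =>
    Nat.unpaired fun a n =>
      n.rec (evalo O cf a) fun y IH => do
        let i ← IH
        evalo O cg (Nat.pair a (Nat.pair y i))
  | .rfind' cf =>
    Nat.unpaired fun a m =>
      (Nat.rfind fun n => (fun x => x = 0) <$> evalo O cf (Nat.pair a (n + m))).map (· + m)

/-- An (injective) numbering of oracle machine codes. -/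
def encodeOCode : OCode → ℕ
  | .zero => 0
  | .succ => 1
  | .left => 2
  | .right => 3
  | .oracle => 4
  | .pair cf cg => 4 * Nat.pair (encodeOCode cf) (encodeOCode cg) + 5
  | .comp cf cg => 4 * Nat.pair (encodeOCode cf) (encodeOCode cg) + 6
  | .prec cf cg => 4 * Nat.pair (encodeOCode cf) (encodeOCode cg) + 7
  | .rfind' cf => 4 * encodeOCode cf + 8

/-- `f : ℕ → ℕ` is (total) computable relative to the oracle `O`. -/
def RecFun (O : ℕ → ℕ) (f : ℕ → ℕ) : Prop :=
  ∃ c : OCode, ∀ n, evalo O c n = Part.some (f n)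

open Classical in
/-- The characteristic function of a set of natural numbers. -/
noncomputable def chi (A : Set ℕ) : ℕ → ℕ := fun n => if n ∈ A then 1 else 0

/-- Turing reducibility `A ≤_T B` for sets of natural numbers. -/
def TuringLE (A B : Set ℕ) : Prop := RecFun (chi B) (chi A)

/-- The recursive join `A ⊕ B = {2n : n ∈ A} ∪ {2n+1 : n ∈ B}`. -/
def join (A B : Set ℕ) : Set ℕ :=
  {n | (n % 2 = 0 ∧ n / 2 ∈ A) ∨ (n % 2 = 1 ∧ n / 2 ∈ B)}

/-- The Turing jump `A' = {⟨e, x⟩ : Φ_e^A(x)↓}`. -/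
def jump (A : Set ℕ) : Set ℕ :=
  {n | ∃ c : OCode, encodeOCode c = n.unpair.1 ∧ (evalo (chi A) c n.unpair.2).Dom}

/-- The iterated Turing jump `A^(n)`. -/
def jumpIter : ℕ → Set ℕ → Set ℕ
  | 0, A => A
  | n + 1, A => jump (jumpIter n A)

/-- A subtree of `2^{<ω}`: a set of finite binary strings closed under initial segments. -/
def IsBinTree (T : Set (List Bool)) : Prop :=
  ∀ s ∈ T, ∀ t : List Bool, t <+: s → t ∈ T

/-- The set of natural numbers coding the strings belonging to `T`. -/
def setOfStrings (T : Set (List Bool)) : Set ℕ :=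
  {n | ∃ s ∈ T, Encodable.encode s = n}

/-- `f : ℕ → Bool` is an infinite path through the tree `T`. -/
def IsPathOf (f : ℕ → Bool) (T : Set (List Bool)) : Prop :=
  ∀ n, (List.ofFn fun i : Fin n => f i) ∈ T

/-- The subset of `ℕ` determined by a `0`-`1` valued function. -/
def toSet (f : ℕ → Bool) : Set ℕ := {n | f n = true}

/-- `A ≪ B`: every infinite `A`-computable binary tree has an infinite path computable
from `B` (equivalently, `B` has PA degree relative to `A`). -/
def ll (A B : Set ℕ) : Prop :=
  ∀ T : Set (List Bool), IsBinTree T → T.Infinite → TuringLE (setOfStrings T) A →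
    ∃ f : ℕ → Bool, IsPathOf f T ∧ TuringLE (toSet f) B

open Classical in
/-- The length-`n` initial segment of (the characteristic function of) `Y`. -/
noncomputable def initSeg (Y : Set ℕ) (n : ℕ) : List Bool :=
  List.ofFn fun i : Fin n => decide ((i : ℕ) ∈ Y)

/-- `Y` is a member of the `c`-th `Π⁰₁` class relative to `X`: no initial segment of `Y`
is ever rejected (output `1`) by the oracle machine `c` with oracle `X`. -/
def PiClassMem (X : Set ℕ) (c : OCode) (Y : Set ℕ) : Prop :=
  ∀ n, ¬ (1 ∈ evalo (chi X) c (Encodable.encode (initSeg Y n)))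

/-- The `i`-th set coded by (the set part of) `W`. -/
def modelCol (W : Set ℕ) (i : ℕ) : Set ℕ := {n | Nat.pair 0 (Nat.pair i n) ∈ W}

/-- `W ⊆ ℕ` codes an effectively coded `ω`-model `(⟨W_i⟩, f_W, g_W)` of `WKL₀`
containing `A`: the sets `W_i` are the columns `modelCol W i`, and the graphs of
`f_W` and `g_W` are coded on the tags `1` and `2` of `W`; moreover (1) `W_0 = A`,
(2) `W_{f_W(i,j)} = W_i ⊕ W_j`, and (3) whenever the `c`-th `Π⁰₁` class relative to
`W_i` is nonempty, `W_{g_W(⌜c⌝, i)}` is a member of it. -/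
def EffCodedWKL (W A : Set ℕ) : Prop :=
  ∃ f g : ℕ → ℕ → ℕ,
    (∀ i j y, f i j = y ↔ Nat.pair 1 (Nat.pair (Nat.pair i j) y) ∈ W) ∧
    (∀ e i y, g e i = y ↔ Nat.pair 2 (Nat.pair (Nat.pair e i) y) ∈ W) ∧
    modelCol W 0 = A ∧
    (∀ i j, modelCol W (f i j) = join (modelCol W i) (modelCol W j)) ∧
    (∀ (c : OCode) (i : ℕ),
      (∃ Y : Set ℕ, PiClassMem (modelCol W i) c Y) →
      PiClassMem (modelCol W i) c (modelCol W (g (encodeOCode c) i)))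


/-!
Write `R_b j` as `∀ m, Q_b j m` with `Q_b j m := ∃ n, p_b ⟨j, ⟨m, n⟩⟩ = 1`. Each `Q_b` is
`Σ⁰₁(X)`, hence decided by `X'`. Call `Y` a selector if no `j ∉ Y` has `Q₀ j` failing at a stage
`m` while `Q₁ j` held at all stages `≤ m`, and symmetrically for `j ∈ Y`. Selectors form a
`Π⁰₁(X')` class, which is nonempty: put `j` into `Y` exactly when `Q₀ j` fails first. As column
`0` of the model is `X'`, some column `W_i` is a selector, and `h j := [j ∈ W_i]` is
`W`-computable. If the selected side of `j` failed at `m`, the other side failed at some stage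
`≤ m`, so neither `R₀ j` nor `R₁ j` holds.
-/

namespace OCode

def ofCode : Nat.Partrec.Code → OCode
  | .zero => .zero
  | .succ => .succ
  | .left => .left
  | .right => .right
  | .pair a b => .pair (ofCode a) (ofCode b)
  | .comp a b => .comp (ofCode a) (ofCode b)
  | .prec a b => .prec (ofCode a) (ofCode b)
  | .rfind' a => .rfind' (ofCode a)

theorem evalo_ofCode (O : ℕ → ℕ) (c : Nat.Partrec.Code) : evalo O (ofCode c) = c.eval := by
  induction c <;> funext n <;> simp [ofCode, evalo, Nat.Partrec.Code.eval, PFun.coe_val, *]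

end OCode

namespace RecFun

variable {O f g : ℕ → ℕ}

theorem of_computable (hf : Computable f) : RecFun O f := by
  obtain ⟨c, hc⟩ := Nat.Partrec.Code.exists_code.1 (Partrec.nat_iff.1 hf)
  exact ⟨.ofCode c, fun n => by rw [OCode.evalo_ofCode, hc]; rfl⟩

theorem of_eq (hf : RecFun O f) (h : ∀ n, f n = g n) : RecFun O g := funext h ▸ hf

theorem oracle : RecFun O O := ⟨.oracle, fun _ => rfl⟩

theorem comp (hf : RecFun O f) (hg : RecFun O g) : RecFun O fun n => f (g n) := by
  obtain ⟨cf, hcf⟩ := hf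
  obtain ⟨cg, hcg⟩ := hg
  exact ⟨.comp cf cg, fun n => (congrArg (· >>= evalo O cf) (hcg n)).trans
    ((Part.bind_some _ _).trans (hcf (g n)))⟩

theorem pair (hf : RecFun O f) (hg : RecFun O g) : RecFun O fun n => Nat.pair (f n) (g n) := by
  obtain ⟨cf, hcf⟩ := hf
  obtain ⟨cg, hcg⟩ := hg
  exact ⟨.pair cf cg, fun n => by simp [evalo, hcg, hcf, Seq.seq]⟩

theorem comp₂ {F : ℕ → ℕ → ℕ} (hF : Computable₂ F) (hf : RecFun O f) (hg : RecFun O g) :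
    RecFun O fun n => F (f n) (g n) := by
  have hF' : Computable fun n : ℕ => F n.unpair.1 n.unpair.2 :=
    hF.comp (Computable.fst.comp Computable.unpair) (Computable.snd.comp Computable.unpair)
  simpa using (of_computable hF').comp (hf.pair hg)

theorem prec (hf : RecFun O f) (hg : RecFun O g) :
    RecFun O fun n => Nat.rec (motive := fun _ => ℕ) (f n.unpair.1)
      (fun y IH => g (Nat.pair n.unpair.1 (Nat.pair y IH))) n.unpair.2 := by
  obtain ⟨cf, hcf⟩ := hf
  obtain ⟨cg, hcg⟩ := hg
  refine ⟨.prec cf cg, fun n => ?_⟩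
  simp only [evalo, Nat.unpaired]
  induction n.unpair.2 with
  | zero => simp [hcf]
  | succ k ih => simp only [ih]; simp [hcg]

theorem rangeMap (hf : RecFun O f) :
    RecFun O fun n => Encodable.encode
      ((List.range n.unpair.2).map fun k => f (Nat.pair n.unpair.1 k)) := by
  set snoc : ℕ → ℕ → ℕ := fun l v =>
    Encodable.encode ((Encodable.decode (α := List ℕ) l).getD [] ++ [v]) with hsnoc
  have hstep : RecFun O fun z => snoc z.unpair.2.unpair.2
      (f (Nat.pair z.unpair.1 z.unpair.2.unpair.1)) := by
    refine comp₂ ?_ (of_computable ?_) (hf.comp (of_computable ?_))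
    · exact (Primrec.encode.comp (Primrec.list_concat.comp
        (Primrec.option_getD.comp (Primrec.decode.comp Primrec.fst) (Primrec.const []))
        Primrec.snd)).to_comp
    · exact (Primrec.snd.comp Primrec.unpair).comp (Primrec.snd.comp Primrec.unpair) |>.to_comp
    · exact (Primrec₂.natPair.comp (Primrec.fst.comp Primrec.unpair)
        ((Primrec.fst.comp Primrec.unpair).comp (Primrec.snd.comp Primrec.unpair))).to_comp
  refine ((of_computable (Computable.const (Encodable.encode ([] : List ℕ)))).prec hstep).of_eq
    fun n => ?_
  simp only [Nat.unpair_pair]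
  induction n.unpair.2 with
  | zero => rfl
  | succ k ih =>
    show snoc _ _ = _
    rw [ih, hsnoc]
    simp [List.range_succ]

end RecFun

theorem exists_code_dom_iff {O f : ℕ → ℕ} (hf : RecFun O f) :
    ∃ c : OCode, ∀ x, (evalo O c x).Dom ↔ ∃ n, f (Nat.pair x n) = 0 := by
  obtain ⟨cf, hcf⟩ := hf
  obtain ⟨cz, hcz⟩ : RecFun O fun x => Nat.pair x 0 :=
    .of_computable (Primrec₂.natPair.comp Primrec.id (Primrec.const 0)).to_comp
  refine ⟨.comp (.rfind' cf) cz, fun x => ?_⟩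
  simp only [evalo, hcz, hcf, Part.bind_eq_bind, Part.bind_some, Nat.unpaired, Nat.unpair_pair,
    add_zero, Part.map_Dom]
  exact Nat.rfind_dom.trans (by simp)

theorem encodeOCode_injective : Function.Injective encodeOCode := by
  intro c
  induction c <;> intro d h <;> cases d <;> simp [encodeOCode, Nat.pair_eq_pair] at h <;> grind

theorem pair_mem_jump_iff {A : Set ℕ} (c : OCode) (x : ℕ) :
    Nat.pair (encodeOCode c) x ∈ jump A ↔ (evalo (chi A) c x).Dom := by
  simp only [jump, Set.mem_ofPred_eq, Nat.unpair_pair]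
  exact ⟨fun ⟨d, hd, hdom⟩ => encodeOCode_injective hd ▸ hdom, fun h => ⟨c, rfl, h⟩⟩

theorem exists_pair_mem_jump_iff {A : Set ℕ} {p : ℕ → ℕ} (hp : RecFun (chi A) p) :
    ∃ D, ∀ x, (∃ n, p (Nat.pair x n) = 1) ↔ Nat.pair D x ∈ jump A := by
  have hq : RecFun (chi A) fun z => if p z = 1 then 0 else 1 :=
    (RecFun.of_computable (Primrec.ite (Primrec.eq.comp Primrec.id (Primrec.const 1))
      (Primrec.const 0) (Primrec.const 1)).to_comp).comp hp
  obtain ⟨c, hc⟩ := exists_code_dom_iff hq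
  exact ⟨encodeOCode c, fun x => by simp [pair_mem_jump_iff, hc]⟩

theorem exists_pair_pair_mem_jump_iff {A : Set ℕ} {p : ℕ → ℕ}
    (hp : RecFun (chi A) p) :
    ∃ D, ∀ j m, (∃ n, p (Nat.pair j (Nat.pair m n)) = 1) ↔ Nat.pair D (Nat.pair j m) ∈ jump A := by
  have hassoc : Computable fun z : ℕ =>
      Nat.pair z.unpair.1.unpair.1 (Nat.pair z.unpair.1.unpair.2 z.unpair.2) :=
    (Primrec₂.natPair.comp ((Primrec.fst.comp .unpair).comp (Primrec.fst.comp .unpair))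
      (Primrec₂.natPair.comp ((Primrec.snd.comp .unpair).comp (Primrec.fst.comp .unpair))
        (Primrec.snd.comp .unpair))).to_comp
  obtain ⟨D, hD⟩ := exists_pair_mem_jump_iff (hp.comp (.of_computable hassoc))
  exact ⟨D, fun j m => by simpa using hD (Nat.pair j m)⟩

theorem chi_eq_one_iff {A : Set ℕ} {n : ℕ} : chi A n = 1 ↔ n ∈ A := by
  by_cases h : n ∈ A <;> simp [chi, h]

theorem chi_eq_zero_iff {A : Set ℕ} {n : ℕ} : chi A n = 0 ↔ n ∉ A := by
  by_cases h : n ∈ A <;> simp [chi, h]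

theorem chi_le_one (A : Set ℕ) (n : ℕ) : chi A n ≤ 1 := by
  unfold chi; split <;> simp

/-- Each stage `k = ⟨j, m⟩` is tested once, on strings of length `k + 1`, which already
contain bit `j` since `j ≤ k`. -/
def bitReject (B₀ B₁ : ℕ → ℕ) (x : ℕ) : ℕ :=
  let s : List Bool := (Encodable.decode x).getD []
  if s.length = 0 then 0
  else cond (s.getD (s.length - 1).unpair.1 false) (B₁ (s.length - 1)) (B₀ (s.length - 1))

theorem recFun_bitReject {O B₀ B₁ : ℕ → ℕ} (h₀ : RecFun O B₀) (h₁ : RecFun O B₁) :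
    RecFun O (bitReject B₀ B₁) := by
  have hs : Primrec fun x : ℕ => (Encodable.decode (α := List Bool) x).getD [] :=
    Primrec.option_getD.comp Primrec.decode (Primrec.const [])
  have hlen := Primrec.list_length.comp hs
  have hlast := Primrec.nat_sub.comp hlen (Primrec.const 1)
  have hbit := (Primrec.list_getD false).comp hs ((Primrec.fst.comp Primrec.unpair).comp hlast)
  have hsel : Computable₂ fun x w : ℕ =>
      bitReject (fun _ => w.unpair.1) (fun _ => w.unpair.2) x :=
    (Primrec.ite (Primrec.eq.comp (hlen.comp Primrec.fst) (Primrec.const 0)) (Primrec.const 0)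
      (Primrec.cond (hbit.comp Primrec.fst) ((Primrec.snd.comp Primrec.unpair).comp Primrec.snd)
        ((Primrec.fst.comp Primrec.unpair).comp Primrec.snd))).to_comp
  have hB := (h₀.comp (RecFun.of_computable hlast.to_comp)).pair
    (h₁.comp (RecFun.of_computable hlast.to_comp))
  exact (RecFun.comp₂ hsel (RecFun.of_computable Computable.id) hB).of_eq fun x => by
    simp [bitReject]

theorem bitReject_initSeg_zero (B₀ B₁ : ℕ → ℕ) (Y : Set ℕ) :
    bitReject B₀ B₁ (Encodable.encode (initSeg Y 0)) = 0 := by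
  simp [bitReject, initSeg]

open Classical in
theorem bitReject_initSeg_succ (B₀ B₁ : ℕ → ℕ) (Y : Set ℕ) (k : ℕ) :
    bitReject B₀ B₁ (Encodable.encode (initSeg Y (k + 1))) =
      if k.unpair.1 ∈ Y then B₁ k else B₀ k := by
  have hj : k.unpair.1 < k + 1 := Nat.lt_succ_of_le (Nat.unpair_left_le k)
  simp only [bitReject, initSeg, Encodable.encodek, Option.getD_some, List.length_ofFn]
  rw [List.getD_eq_getElem _ _ (by simpa using hj), List.getElem_ofFn]
  by_cases h : k.unpair.1 ∈ Y <;> simp [h]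

theorem exists_code_piClassMem_iff {A : Set ℕ} {B₀ B₁ : ℕ → ℕ}
    (h₀ : RecFun (chi A) B₀) (h₁ : RecFun (chi A) B₁) :
    ∃ c, ∀ Y, PiClassMem A c Y ↔
      ∀ j m, (j ∉ Y → B₀ (Nat.pair j m) ≠ 1) ∧ (j ∈ Y → B₁ (Nat.pair j m) ≠ 1) := by
  obtain ⟨c, hc⟩ := recFun_bitReject h₀ h₁
  refine ⟨c, fun Y => ?_⟩
  have hrej : ∀ k, bitReject B₀ B₁ (Encodable.encode (initSeg Y (k + 1))) ≠ 1 ↔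
      (k.unpair.1 ∉ Y → B₀ k ≠ 1) ∧ (k.unpair.1 ∈ Y → B₁ k ≠ 1) :=
    fun k => by by_cases hY : k.unpair.1 ∈ Y <;> simp [bitReject_initSeg_succ, hY]
  simp only [PiClassMem, hc, Part.mem_some_iff, eq_comm (a := 1)]
  constructor
  · intro h j m
    simpa using (hrej (Nat.pair j m)).1 (h (Nat.pair j m + 1))
  · rintro h (_ | k)
    · simp [bitReject_initSeg_zero]
    · exact (hrej k).2 (by simpa using h k.unpair.1 k.unpair.2)

def FailsFirst (q q' : ℕ → Prop) (m : ℕ) : Prop := ¬ q m ∧ ∀ k ≤ m, q' k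

theorem FailsFirst.not_swap {q q' : ℕ → Prop} {k m : ℕ} (h : FailsFirst q q' k) :
    ¬ FailsFirst q' q m := by
  rintro ⟨hm, hq⟩
  rcases le_total k m with hkm | hmk
  · exact h.1 (hq k hkm)
  · exact hm (h.2 m hmk)

theorem forall_of_forall_not_failsFirst {q q' : ℕ → Prop} (h : ∀ m, ¬ FailsFirst q q' m)
    (hor : (∀ m, q m) ∨ (∀ m, q' m)) (m : ℕ) : q m := by
  by_contra hm
  obtain ⟨k, -, hk⟩ : ∃ k ≤ m, ¬ q' k := by simpa [FailsFirst, hm] using h m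
  rcases hor with h₀ | h₁
  · exact hm (h₀ m)
  · exact hk (h₁ k)

def FirstFailureSelector (Q₀ Q₁ : ℕ → ℕ → Prop) (Y : Set ℕ) : Prop :=
  ∀ j m, (j ∉ Y → ¬ FailsFirst (Q₀ j) (Q₁ j) m) ∧ (j ∈ Y → ¬ FailsFirst (Q₁ j) (Q₀ j) m)

theorem exists_firstFailureSelector (Q₀ Q₁ : ℕ → ℕ → Prop) :
    ∃ Y, FirstFailureSelector Q₀ Q₁ Y := by
  refine ⟨{j | ∃ k, FailsFirst (Q₀ j) (Q₁ j) k}, fun j m => ⟨fun hj hm => hj ⟨m, hm⟩, ?_⟩⟩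
  rintro ⟨k, hk⟩
  exact hk.not_swap

namespace FirstFailureSelector

variable {Q₀ Q₁ : ℕ → ℕ → Prop} {Y : Set ℕ} {j : ℕ}

theorem forall_of_not_mem (hY : FirstFailureSelector Q₀ Q₁ Y) (hj : j ∉ Y)
    (hor : (∀ m, Q₀ j m) ∨ (∀ m, Q₁ j m)) : ∀ m, Q₀ j m :=
  forall_of_forall_not_failsFirst (fun m => (hY j m).1 hj) hor

theorem forall_of_mem (hY : FirstFailureSelector Q₀ Q₁ Y) (hj : j ∈ Y)
    (hor : (∀ m, Q₀ j m) ∨ (∀ m, Q₁ j m)) : ∀ m, Q₁ j m :=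
  forall_of_forall_not_failsFirst (fun m => (hY j m).2 hj) hor.symm

end FirstFailureSelector

open Classical in
theorem recFun_failsFirst {A : Set ℕ} {Q Q' : ℕ → ℕ → Prop} {D D' : ℕ}
    (hQ : ∀ j m, Q j m ↔ Nat.pair D (Nat.pair j m) ∈ A)
    (hQ' : ∀ j m, Q' j m ↔ Nat.pair D' (Nat.pair j m) ∈ A) :
    RecFun (chi A) fun n =>
      if FailsFirst (Q n.unpair.1) (Q' n.unpair.1) n.unpair.2 then 1 else 0 := by
  have hdecide : Computable₂ fun (a l : ℕ) =>
      if a = 0 ∧ ∀ x ∈ (Encodable.decode (α := List ℕ) l).getD [], x = 1 then 1 else 0 :=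
    (Primrec.ite ((Primrec.eq.comp Primrec.fst (Primrec.const 0)).and
      ((PrimrecPred.forall_mem_list (Primrec.eq.comp Primrec.id (Primrec.const 1))).comp
        (Primrec.option_getD.comp (Primrec.decode.comp Primrec.snd) (Primrec.const []))))
      (Primrec.const 1) (Primrec.const 0)).to_comp
  have hquery (E : ℕ) : RecFun (chi A) fun n => chi A (Nat.pair E n) :=
    RecFun.oracle.comp (.of_computable (Primrec₂.natPair.comp (.const E) .id).to_comp)
  have hqueries : RecFun (chi A) fun n => Encodable.encode
      ((List.range (n.unpair.2 + 1)).map fun k => chi A (Nat.pair D' (Nat.pair n.unpair.1 k))) :=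
    ((hquery D').rangeMap.comp (.of_computable (Primrec₂.natPair.comp (Primrec.fst.comp .unpair)
      (Primrec.succ.comp (Primrec.snd.comp .unpair))).to_comp)).of_eq fun n => by simp
  refine (RecFun.comp₂ hdecide (hquery D) hqueries).of_eq fun n => ?_
  simp [FailsFirst, hQ, hQ', chi_eq_zero_iff, chi_eq_one_iff]

theorem exists_code_piClassMem_iff_firstFailureSelector {A : Set ℕ} {Q₀ Q₁ : ℕ → ℕ → Prop}
    {D₀ D₁ : ℕ} (hQ₀ : ∀ j m, Q₀ j m ↔ Nat.pair D₀ (Nat.pair j m) ∈ A)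
    (hQ₁ : ∀ j m, Q₁ j m ↔ Nat.pair D₁ (Nat.pair j m) ∈ A) :
    ∃ c, ∀ Y, PiClassMem A c Y ↔ FirstFailureSelector Q₀ Q₁ Y := by
  obtain ⟨c, hc⟩ :=
    exists_code_piClassMem_iff (recFun_failsFirst hQ₀ hQ₁) (recFun_failsFirst hQ₁ hQ₀)
  exact ⟨c, fun Y => by simp [hc, FirstFailureSelector]⟩

/-- **`Π₂` selection from a coded model of the jump** (prop:piselect, standard-model
content). Given `Π⁰₂(X)` predicates `R_b j := ∀ m ∃ n, p_b ⟨j,⟨m,n⟩⟩ = 1` (`b = 0, 1`)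
with `X`-computable matrices `p₀, p₁`, and an effectively coded `ω`-model `W` of `WKL₀`
containing `X'`, there is an `h ≤_T W` with values in `{0,1}` such that whenever
`R₀ j ∨ R₁ j`, `h j = 0` implies `R₀ j` and `h j = 1` implies `R₁ j`. -/
theorem pi2_selection (X : Set ℕ) (p₀ p₁ : ℕ → ℕ)
    (hp₀ : RecFun (chi X) p₀) (hp₁ : RecFun (chi X) p₁)
    (W : Set ℕ) (hW : EffCodedWKL W (jump X)) :
    ∃ h : ℕ → ℕ, RecFun (chi W) h ∧ (∀ j, h j ≤ 1) ∧
      ∀ j,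
        ((∀ m, ∃ n, p₀ (Nat.pair j (Nat.pair m n)) = 1) ∨
          (∀ m, ∃ n, p₁ (Nat.pair j (Nat.pair m n)) = 1)) →
        (h j = 0 → ∀ m, ∃ n, p₀ (Nat.pair j (Nat.pair m n)) = 1) ∧
        (h j = 1 → ∀ m, ∃ n, p₁ (Nat.pair j (Nat.pair m n)) = 1) := by
  obtain ⟨D₀, hD₀⟩ := exists_pair_pair_mem_jump_iff hp₀
  obtain ⟨D₁, hD₁⟩ := exists_pair_pair_mem_jump_iff hp₁
  obtain ⟨c, hc⟩ := exists_code_piClassMem_iff_firstFailureSelector hD₀ hD₁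
  obtain ⟨-, g, -, -, hW₀, -, hWKL⟩ := hW
  have hmodel := hWKL c 0
  rw [hW₀] at hmodel
  set i := g (encodeOCode c) 0
  have hY : FirstFailureSelector _ _ (modelCol W i) :=
    (hc _).1 (hmodel ((exists_firstFailureSelector _ _).imp fun Y => (hc Y).2))
  refine ⟨fun j => chi W (Nat.pair 0 (Nat.pair i j)), ?_, fun j => chi_le_one _ _,
    fun j hor => ⟨fun h => hY.forall_of_not_mem (chi_eq_zero_iff.1 h) hor,
      fun h => hY.forall_of_mem (chi_eq_one_iff.1 h) hor⟩⟩
  exact RecFun.oracle.comp (.of_computable (Primrec₂.natPair.comp (.const 0)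
    (Primrec₂.natPair.comp (.const i) .id)).to_comp)

end ArxivLL
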